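/- (Corollary 1, odd moments.) Let n ≥ 1 be an integer, let α > 0, β ≥ 0, γ, δ be real numbers with n > γ + δ − 2α + 1, let r ∈ (−1,1), and let k ≥ 1 be an odd integer. Then ∫_{−1}^{1} ρ^k · 2rρ (1−ρ²)^{(2α+n−γ−δ−3)/2} (1+ρ²)^{β/2} W_{γ,δ}(n) ₂F₁((n−γ)/2, (n−δ)/2; 3/2; r²ρ²) dρ = 2 W_{γ,δ}(n) Σ_{m=0}^∞ [ ((n−γ)/2)_m ((n−δ)/2)_m / ((3/2)_m m!) ] b_{k,m} r^{2m+1}, where b_{k,m} = B( (k+2m+2)/2, α + (n−γ−δ−1)/2 ) · ₂F₁( −β/2, (k+2m+2)/2; (k+2m+2α+n−γ−δ+1)/2; −1 ), and the series on the right converges. -/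

import Mathlib

open MeasureTheory Real Set

/-- Pochhammer symbol (rising factorial) `(x)_m`. -/
noncomputable def poch (x : ℝ) (m : ℕ) : ℝ := (ascPochhammer ℝ m).eval x

/-- Confluent hypergeometric function `₁F₁(a; c; z)`. -/
noncomputable def oneF1 (a c z : ℝ) : ℝ :=
  ∑' m : ℕ, poch a m / (poch c m * (m.factorial : ℝ)) * z ^ m

/-- Gauss hypergeometric function `₂F₁(a, b; c; z)`. -/
noncomputable def twoF1 (a b c z : ℝ) : ℝ :=
  ∑' m : ℕ, poch a m * poch b m / (poch c m * (m.factorial : ℝ)) * z ^ m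

/-- Generalized hypergeometric function `₃F₂(a₁, a₂, a₃; b₁, b₂; z)`. -/
noncomputable def threeF2 (a₁ a₂ a₃ b₁ b₂ z : ℝ) : ℝ :=
  ∑' m : ℕ, poch a₁ m * poch a₂ m * poch a₃ m /
      (poch b₁ m * poch b₂ m * (m.factorial : ℝ)) * z ^ m

/-- Beta function `B(u,v) = Γ(u)Γ(v)/Γ(u+v)`. -/
noncomputable def betaFn (u v : ℝ) : ℝ := Real.Gamma u * Real.Gamma v / Real.Gamma (u + v)

/-- `W_{γ,δ}(n)`, the ratio of Gamma functions from the paper. -/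
noncomputable def Wgd (γ δ : ℝ) (n : ℕ) : ℝ :=
  (Real.Gamma (((n : ℝ) - γ) / 2) * Real.Gamma (((n : ℝ) - δ) / 2)) /
    (Real.Gamma (((n : ℝ) - γ - 1) / 2) * Real.Gamma (((n : ℝ) - δ - 1) / 2))

lemma poch_zero (x : ℝ) : poch x 0 = 1 := by simp [poch]

lemma poch_succ (x : ℝ) (m : ℕ) : poch x (m+1) = poch x m * (x + m) := by
  simp [poch, ascPochhammer_succ_right]

lemma poch_pos {x : ℝ} (hx : 0 < x) (m : ℕ) : 0 < poch x m := by
  induction m with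
  | zero => simp [poch_zero]
  | succ m ih => rw [poch_succ]; positivity

lemma tendsto_ratio_aux (A C : ℝ) (hC : 0 < C) :
    Filter.Tendsto (fun m : ℕ => ((m : ℝ) + A) / ((m : ℝ) + C)) Filter.atTop (nhds 1) := by
  have h1 : Filter.Tendsto (fun m : ℕ => ((m : ℝ) + C)) Filter.atTop Filter.atTop :=
    Filter.tendsto_atTop_add_const_right _ C tendsto_natCast_atTop_atTop
  have h2 : Filter.Tendsto (fun m : ℕ => 1 + (A - C) / ((m : ℝ) + C)) Filter.atTop (nhds 1) := by
    have := Filter.Tendsto.div_atTop (tendsto_const_nhds (x := A - C)) h1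
    simpa using (tendsto_const_nhds (x := (1:ℝ))).add this
  refine h2.congr fun m => ?_
  have hm : ((m : ℝ) + C) ≠ 0 := by positivity
  field_simp
  ring

lemma tendsto_ratio (A B C D : ℝ) (hC : 0 < C) (hD : 0 < D) :
    Filter.Tendsto (fun m : ℕ => (((m : ℝ) + A) * ((m : ℝ) + B)) / (((m : ℝ) + C) * ((m : ℝ) + D)))
      Filter.atTop (nhds 1) := by
  have := (tendsto_ratio_aux A C hC).mul (tendsto_ratio_aux B D hD)
  rw [mul_one] at this
  refine this.congr fun m => ?_
  rw [div_mul_div_comm]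

/-- ratio-test summability for 2F1-type coefficients -/
lemma summable_poch_ratio {a b c z : ℝ} (hc : 0 < c) (hz : |z| < 1) :
    Summable (fun m : ℕ => poch a m * poch b m / (poch c m * (m.factorial : ℝ)) * z ^ m) := by
  set f : ℕ → ℝ := fun m => poch a m * poch b m / (poch c m * (m.factorial : ℝ)) * z ^ m with hf
  have hrec : ∀ m : ℕ, f (m+1) = f m * ((a + m) * (b + m) * z / ((c + m) * (m + 1))) := by
    intro m
    have h1 : poch c m ≠ 0 := (poch_pos hc m).ne'
    have h2 : (m.factorial : ℝ) ≠ 0 := Nat.cast_ne_zero.mpr m.factorial_ne_zero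
    have h3 : (c + m) ≠ 0 := by positivity
    have h4 : ((m : ℝ) + 1) ≠ 0 := by positivity
    simp only [hf, poch_succ, Nat.factorial_succ, Nat.cast_mul, pow_succ, Nat.cast_add,
      Nat.cast_one]
    field_simp
  set r : ℝ := (1 + |z|) / 2 with hr
  have hr1 : r < 1 := by rw [hr]; linarith
  have hzr : |z| < r := by rw [hr]; linarith
  apply summable_of_ratio_norm_eventually_le hr1
  have htend : Filter.Tendsto
      (fun m : ℕ => (((m:ℝ) + |a|) * ((m:ℝ) + |b|)) / (((m:ℝ) + c) * ((m:ℝ) + 1)) * |z|)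
      Filter.atTop (nhds |z|) := by
    have := (tendsto_ratio |a| |b| c 1 hc one_pos).mul_const |z|
    rwa [one_mul] at this
  have hev : ∀ᶠ m : ℕ in Filter.atTop,
      (((m:ℝ) + |a|) * ((m:ℝ) + |b|)) / (((m:ℝ) + c) * ((m:ℝ) + 1)) * |z| ≤ r :=
    htend.eventually_le_const hzr
  filter_upwards [hev] with m hm
  rw [hrec m]
  rw [norm_mul]
  calc ‖f m‖ * ‖(a + m) * (b + m) * z / ((c + m) * (m + 1))‖
      ≤ ‖f m‖ * ((((m:ℝ) + |a|) * ((m:ℝ) + |b|)) / (((m:ℝ) + c) * ((m:ℝ) + 1)) * |z|) := by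
        apply mul_le_mul_of_nonneg_left _ (norm_nonneg _)
        rw [norm_div, norm_mul, norm_mul, norm_mul]
        have hd : ‖c + (m:ℝ)‖ * ‖(m:ℝ) + 1‖ = ((m:ℝ) + c) * ((m:ℝ) + 1) := by
          rw [Real.norm_of_nonneg (by positivity), Real.norm_of_nonneg (by positivity)]
          ring
        rw [hd, div_mul_eq_mul_div, div_le_div_iff_of_pos_right (by positivity)]
        apply mul_le_mul_of_nonneg_right _ (norm_nonneg z)
        have h1 : ‖a + (m:ℝ)‖ ≤ (m:ℝ) + |a| := by
          rw [Real.norm_eq_abs]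
          have := abs_add_le a (m:ℝ)
          rw [Nat.abs_cast] at this; linarith
        have h2 : ‖b + (m:ℝ)‖ ≤ (m:ℝ) + |b| := by
          rw [Real.norm_eq_abs]
          have := abs_add_le b (m:ℝ)
          rw [Nat.abs_cast] at this; linarith
        exact mul_le_mul h1 h2 (norm_nonneg _) (by positivity)
    _ ≤ ‖f m‖ * r := mul_le_mul_of_nonneg_left hm (norm_nonneg _)
    _ = r * ‖f m‖ := mul_comm _ _

lemma Gamma_poch {x : ℝ} (hx : 0 < x) (j : ℕ) :
    Real.Gamma (x + j) = Real.Gamma x * poch x j := by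
  induction j with
  | zero => simp [poch_zero]
  | succ j ih =>
    have hxj : x + (j:ℝ) ≠ 0 := by positivity
    have : x + ((j:ℕ)+1:ℕ) = (x + j) + 1 := by push_cast; ring
    rw [this, Real.Gamma_add_one hxj, ih, poch_succ]
    ring

lemma betaFn_pos {u v : ℝ} (hu : 0 < u) (hv : 0 < v) : 0 < betaFn u v := by
  unfold betaFn
  have := Real.Gamma_pos_of_pos hu
  have := Real.Gamma_pos_of_pos hv
  have := Real.Gamma_pos_of_pos (by linarith : (0:ℝ) < u + v)
  positivity

lemma betaFn_add_nat {u v : ℝ} (hu : 0 < u) (hv : 0 < v) (j : ℕ) :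
    betaFn (u + j) v = betaFn u v * (poch u j / poch (u + v) j) := by
  unfold betaFn
  have h1 : Real.Gamma (u + j) = Real.Gamma u * poch u j := Gamma_poch hu j
  have h2 : u + (j:ℝ) + v = (u + v) + j := by ring
  have h3 : Real.Gamma ((u + v) + j) = Real.Gamma (u+v) * poch (u+v) j :=
    Gamma_poch (by linarith) j
  rw [h1, h2, h3]
  have g1 : Real.Gamma (u + v) ≠ 0 := (Real.Gamma_pos_of_pos (by linarith)).ne'
  have g2 : poch (u+v) j ≠ 0 := (poch_pos (by linarith) j).ne'
  field_simp

/-- generalized binomial coefficient `binom(s, j)` -/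
noncomputable def cB (s : ℝ) (j : ℕ) : ℝ := (-1)^j * poch (-s) j / (j.factorial : ℝ)

lemma cB_zero (s : ℝ) : cB s 0 = 1 := by simp [cB, poch_zero]

lemma cB_succ (s : ℝ) (j : ℕ) : cB s (j+1) * (j+1) = cB s j * (s - j) := by
  have h2 : (j.factorial : ℝ) ≠ 0 := Nat.cast_ne_zero.mpr j.factorial_ne_zero
  simp only [cB, poch_succ, Nat.factorial_succ, Nat.cast_mul, pow_succ, Nat.cast_add, Nat.cast_one]
  field_simp
  ring

lemma cB_succ' (s : ℝ) (j : ℕ) : cB s (j+1) = cB s j * (s - j) / (j+1) := by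
  have := cB_succ s j
  field_simp at this ⊢
  linarith

lemma abs_cB_succ {s : ℝ} (hs : 0 ≤ s) {j : ℕ} (hj : s ≤ j) :
    |cB s (j+1)| = |cB s j| * (((j:ℝ) - s) / (j+1)) := by
  rw [cB_succ' s j, abs_div, abs_mul]
  rw [abs_of_nonneg (by positivity : (0:ℝ) ≤ (j:ℝ)+1)]
  rw [abs_of_nonpos (by linarith : s - (j:ℝ) ≤ 0)]
  ring

lemma betaFn_succ_left {u v : ℝ} (hu : 0 < u) (hv : 0 < v) :
    betaFn (u + 1) v = betaFn u v * (u / (u + v)) := by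
  unfold betaFn
  rw [Real.Gamma_add_one hu.ne']
  have h2 : u + 1 + v = (u + v) + 1 := by ring
  rw [h2, Real.Gamma_add_one (by positivity : (u+v) ≠ 0)]
  have g1 : Real.Gamma (u + v) ≠ 0 := (Real.Gamma_pos_of_pos (by linarith)).ne'
  field_simp

/-- Key summability estimate: `∑ |binom(s,j)| B(u+j, v) < ∞` for `u, v > 0`, `s ≥ 0`. -/
lemma summable_abs_cB_mul_betaFn {s u v : ℝ} (hs : 0 ≤ s) (hu : 0 < u) (hv : 0 < v) :
    Summable (fun j : ℕ => |cB s j| * betaFn (u + j) v) := by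
  set a : ℕ → ℝ := fun j => |cB s j| * betaFn (u + j) v with ha
  have ha_nonneg : ∀ j, 0 ≤ a j := fun j =>
    mul_nonneg (abs_nonneg _) (betaFn_pos (by positivity) hv).le
  set w : ℝ := v / 2 with hw
  have hw0 : 0 < w := by positivity
  obtain ⟨M, hM⟩ := exists_nat_ge (max (max s (u + v)) 1)
  have hMs : s ≤ M := le_trans (le_max_of_le_left (le_max_left _ _)) hM
  have hMuv : u + v ≤ M := le_trans (le_max_of_le_left (le_max_right _ _)) hM
  have hM1 : (1:ℝ) ≤ M := le_trans (le_max_right _ _) hM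
  -- one-step estimate
  have hstep : ∀ j : ℕ, (M:ℝ) ≤ j → a (j+1) ≤ a j * (((j:ℝ) / (j+1)) ^ ((1:ℝ) + w)) := by
    intro j hj
    have hjs : s ≤ j := le_trans hMs hj
    have hjuv : u + v ≤ j := le_trans hMuv hj
    have hj1 : (1:ℝ) ≤ j := le_trans hM1 hj
    have hrec : a (j+1) = a j * (((j:ℝ) - s) / (j+1)) * ((u + j) / (u + v + j)) := by
      have h1 : u + ((j:ℕ)+1:ℕ) = (u + j) + 1 := by push_cast; ring
      rw [ha]
      simp only
      rw [abs_cB_succ hs (by exact_mod_cast hjs), h1,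
        betaFn_succ_left (by positivity) hv]
      have : u + (j:ℝ) + v = u + v + j := by ring
      rw [this]; ring
    have hkey : (((j:ℝ) - s) / (j+1)) * ((u + j) / (u + v + j)) ≤ ((j:ℝ) - w) / (j+1) := by
      rw [div_mul_div_comm, div_le_div_iff₀ (by positivity) (by positivity), hw]
      have hsj : (0:ℝ) ≤ s * j := mul_nonneg hs (Nat.cast_nonneg j)
      have hsu : (0:ℝ) ≤ s * u := mul_nonneg hs hu.le
      have hvj : (0:ℝ) ≤ v * ((j:ℝ) - (u + v)) := mul_nonneg hv.le (sub_nonneg.mpr hjuv)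
      nlinarith [hj1]
    have hbern : ((j:ℝ) - w) / (j+1) ≤ ((j:ℝ) / (j+1)) ^ ((1:ℝ) + w) := by
      have h0 : (-1:ℝ) ≤ -(1/((j:ℝ)+1)) := by
        rw [neg_le_neg_iff]
        rw [div_le_one (by positivity)]; linarith
      have := one_add_mul_self_le_rpow_one_add h0 (by linarith : (1:ℝ) ≤ 1 + w)
      have he1 : (1:ℝ) + -(1/((j:ℝ)+1)) = (j:ℝ)/(j+1) := by field_simp; ring
      have he2 : (1:ℝ) + (1+w) * -(1/((j:ℝ)+1)) = ((j:ℝ) - w) / (j+1) := by field_simp; ring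
      rw [he1, he2] at this
      exact this
    calc a (j+1) = a j * ((((j:ℝ) - s) / (j+1)) * ((u + j) / (u + v + j))) := by
          rw [hrec]; ring
      _ ≤ a j * (((j:ℝ) - w) / (j+1)) :=
          mul_le_mul_of_nonneg_left hkey (ha_nonneg j)
      _ ≤ a j * (((j:ℝ) / (j+1)) ^ ((1:ℝ) + w)) :=
          mul_le_mul_of_nonneg_left hbern (ha_nonneg j)
  -- comparison sequence
  set d : ℕ → ℝ := fun j => ((j:ℝ)) ^ (-(1 + w)) with hd
  have hd_pos : ∀ j : ℕ, 1 ≤ j → 0 < d j := by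
    intro j hj
    apply Real.rpow_pos_of_pos
    exact_mod_cast Nat.lt_of_lt_of_le Nat.zero_lt_one hj
  have hdM : 0 < d M := hd_pos M (by exact_mod_cast hM1)
  set C : ℝ := a M / d M with hC
  have hind : ∀ i : ℕ, a (M + i) ≤ C * d (M + i) := by
    intro i
    induction i with
    | zero => simp only [Nat.add_zero, hC]; rw [div_mul_cancel₀]; exact hdM.ne'
    | succ i ih =>
      have hj : (M:ℝ) ≤ (M + i : ℕ) := by push_cast; have : (0:ℝ) ≤ (i:ℝ) := Nat.cast_nonneg i; linarith
      have hj1 : (1:ℝ) ≤ ((M + i : ℕ):ℝ) := le_trans hM1 hj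
      have hj0 : (0:ℝ) < ((M + i : ℕ):ℝ) := by linarith
      have h1 := hstep (M + i) hj
      have h2 : a (M+i) * ((((M+i:ℕ):ℝ) / ((M+i:ℕ)+1)) ^ ((1:ℝ) + w)) ≤
          C * d (M+i) * ((((M+i:ℕ):ℝ) / ((M+i:ℕ)+1)) ^ ((1:ℝ) + w)) := by
        apply mul_le_mul_of_nonneg_right ih
        positivity
      have h3 : d (M+i) * ((((M+i:ℕ):ℝ) / ((M+i:ℕ)+1)) ^ ((1:ℝ) + w)) = d (M+i+1) := by
        rw [hd]
        simp only
        rw [show (((M+i+1:ℕ)):ℝ) = ((M+i:ℕ):ℝ) + 1 by push_cast; ring]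
        rw [Real.div_rpow hj0.le (by positivity), Real.rpow_neg hj0.le,
          Real.rpow_neg (by positivity : (0:ℝ) ≤ ((M+i:ℕ):ℝ)+1)]
        have hne1 : ((M+i:ℕ):ℝ) ^ ((1:ℝ)+w) ≠ 0 := by positivity
        field_simp
      have : M + (i+1) = (M + i) + 1 := by ring
      rw [this]
      calc a (M+i+1) ≤ a (M+i) * ((((M+i:ℕ):ℝ) / ((M+i:ℕ)+1)) ^ ((1:ℝ) + w)) := h1
        _ ≤ C * d (M+i) * ((((M+i:ℕ):ℝ) / ((M+i:ℕ)+1)) ^ ((1:ℝ) + w)) := h2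
        _ = C * d (M+i+1) := by rw [mul_assoc, h3]
  have hd_summable : Summable (fun i : ℕ => d (M + i)) := by
    have : Summable d := by
      rw [hd]
      exact Real.summable_nat_rpow.mpr (by linarith)
    exact ((summable_nat_add_iff M).mpr this).congr fun i => congrArg d (Nat.add_comm i M)
  have hsa : Summable (fun i : ℕ => a (M + i)) := by
    apply Summable.of_nonneg_of_le (fun i => ha_nonneg _) (fun i => hind i)
    exact hd_summable.mul_left C
  exact (summable_nat_add_iff M).mp (hsa.congr fun i => congrArg a (Nat.add_comm M i))

/-- The binomial series `(1+t)^s = ∑ binom(s,j) t^j` for `0 ≤ t < 1`. -/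
lemma binom_hasSum (s : ℝ) {t : ℝ} (ht0 : 0 ≤ t) (ht1 : t < 1) :
    HasSum (fun j : ℕ => cB s j * t ^ j) ((1 + t) ^ s) := by
  set b : ℝ := (1 + t) / 2 with hb
  have hb0 : 0 < b := by rw [hb]; linarith
  have hb1 : b < 1 := by rw [hb]; linarith
  have htb : t < b := by rw [hb]; linarith
  set T : Set ℝ := Ioo (-b) b with hT
  have hTopen : IsOpen T := isOpen_Ioo
  have hTconn : IsPreconnected T := isPreconnected_Ioo
  have ht_mem : t ∈ T := ⟨by linarith, htb⟩
  have h0_mem : (0:ℝ) ∈ T := ⟨by linarith, hb0⟩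
  -- the uniform derivative bound
  set u : ℕ → ℝ := fun j => |cB s j| * ((j:ℝ) * b ^ (j - 1)) with hu
  have hu_nonneg : ∀ j, 0 ≤ u j := fun j => by
    apply mul_nonneg (abs_nonneg _); positivity
  have hu_sum : Summable u := by
    set r : ℝ := (1 + b) / 2 with hr
    have hr1 : r < 1 := by rw [hr]; linarith
    have hbr : b < r := by rw [hr]; linarith
    obtain ⟨N, hN⟩ := exists_nat_ge (max 1 (|s| * b / (r - b)))
    apply summable_of_ratio_norm_eventually_le hr1
    filter_upwards [Filter.eventually_ge_atTop N] with j hj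
    have hjN : (N:ℝ) ≤ j := by exact_mod_cast hj
    have hj1 : (1:ℝ) ≤ j := le_trans (le_trans (le_max_left _ _) hN) hjN
    have hjs : |s| * b / (r - b) ≤ j := le_trans (le_trans (le_max_right _ _) hN) hjN
    have hj0 : j ≠ 0 := by
      intro h; rw [h] at hj1; norm_num at hj1
    have hpow : b ^ j = b ^ (j - 1) * b := by
      rw [← pow_succ, Nat.sub_add_cancel (Nat.one_le_iff_ne_zero.mpr hj0)]
    have habs : |cB s (j+1)| ≤ |cB s j| * (((j:ℝ) + |s|) / (j+1)) := by
      rw [cB_succ' s j, abs_div, abs_mul]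
      rw [abs_of_nonneg (by positivity : (0:ℝ) ≤ (j:ℝ)+1), ← mul_div_assoc]
      gcongr
      calc |s - (j:ℝ)| ≤ |s| + |(j:ℝ)| := abs_sub _ _
        _ = (j:ℝ) + |s| := by rw [Nat.abs_cast]; ring
    have hkey : ((j:ℝ) + |s|) * b ≤ r * j := by
      have h1 : |s| * b ≤ (r - b) * j := by
        rw [div_le_iff₀ (by linarith : (0:ℝ) < r - b)] at hjs
        linarith
      nlinarith [hb0.le]
    calc ‖u (j+1)‖ = |cB s (j+1)| * (((j:ℝ)+1) * b ^ j) := by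
          rw [Real.norm_of_nonneg (hu_nonneg (j+1)), hu]
          simp only [Nat.add_sub_cancel]
          push_cast; ring
      _ ≤ |cB s j| * (((j:ℝ) + |s|) / (j+1)) * (((j:ℝ)+1) * b ^ j) := by
          apply mul_le_mul_of_nonneg_right habs (by positivity)
      _ = |cB s j| * (((j:ℝ) + |s|) * b) * b ^ (j-1) := by
          rw [hpow]; field_simp
      _ ≤ |cB s j| * (r * j) * b ^ (j-1) := by
          apply mul_le_mul_of_nonneg_right _ (by positivity)
          exact mul_le_mul_of_nonneg_left hkey (abs_nonneg _)
      _ = r * ‖u j‖ := by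
          rw [Real.norm_of_nonneg (hu_nonneg j), hu]; ring
  -- the series of functions and its derivative series
  set g : ℕ → ℝ → ℝ := fun j y => cB s j * y ^ j with hg
  set g' : ℕ → ℝ → ℝ := fun j y => cB s j * ((j:ℝ) * y ^ (j - 1)) with hg'
  have hgderiv : ∀ j y, y ∈ T → HasDerivAt (g j) (g' j y) y := by
    intro j y _
    exact (hasDerivAt_pow j y).const_mul (cB s j)
  have hgbound : ∀ j y, y ∈ T → ‖g' j y‖ ≤ u j := by
    intro j y hy
    rw [hg', hu]
    simp only [norm_mul, Real.norm_eq_abs, abs_mul, abs_pow, Nat.abs_cast]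
    have hyb : |y| ≤ b := abs_le.mpr ⟨(hy.1).le, (hy.2).le⟩
    gcongr
  have hg0 : Summable fun j => g j 0 := by
    apply summable_of_ne_finset_zero (s := {0})
    intro j hj
    have : j ≠ 0 := by simpa using hj
    simp [hg, zero_pow this]
  have hFsum : ∀ y ∈ T, Summable fun j => g j y := fun y hy =>
    summable_of_summable_hasDerivAt_of_isPreconnected hu_sum hTopen hTconn hgderiv
      hgbound h0_mem hg0 hy
  set F : ℝ → ℝ := fun y => ∑' j, g j y with hF
  have hFderiv : ∀ y ∈ T, HasDerivAt F (∑' j, g' j y) y := fun y hy =>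
    hasDerivAt_tsum_of_isPreconnected hu_sum hTopen hTconn hgderiv hgbound h0_mem hg0 hy
  -- the ODE (1+x) F' = s F on T
  have hDsum : ∀ y ∈ T, Summable fun j => g' j y := fun y hy =>
    Summable.of_norm_bounded hu_sum (fun j => hgbound j y hy)
  have hODE : ∀ x ∈ T, (1 + x) * (∑' j, g' j x) = s * F x := by
    intro x hx
    have hA := hDsum x hx
    have h1sum : Summable fun j => cB s j * (j:ℝ) * x ^ j := by
      apply (hA.mul_left x).congr
      intro j
      cases j with
      | zero => simp [hg']
      | succ j => simp only [hg', Nat.add_sub_cancel]; ring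
    have h2sum : Summable fun j => cB s j * (s - (j:ℝ)) * x ^ j := by
      apply ((summable_nat_add_iff 1).mpr hA).congr
      intro j
      simp only [hg', Nat.add_sub_cancel]
      have h := cB_succ s j
      push_cast
      linear_combination x ^ j * h
    have claim1 : x * (∑' j, g' j x) = ∑' j, cB s j * (j:ℝ) * x ^ j := by
      rw [← tsum_mul_left]
      apply tsum_congr
      intro j
      cases j with
      | zero => simp [hg']
      | succ j => simp only [hg', Nat.add_sub_cancel]; ring
    have claim2 : (∑' j, g' j x) = ∑' j, cB s j * (s - (j:ℝ)) * x ^ j := by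
      rw [Summable.tsum_eq_zero_add hA]
      have hz : g' 0 x = 0 := by simp [hg']
      rw [hz, zero_add]
      apply tsum_congr
      intro j
      simp only [hg', Nat.add_sub_cancel]
      have h := cB_succ s j
      push_cast
      linear_combination x ^ j * h
    have hsF : s * F x = ∑' j, s * (cB s j * x ^ j) := by rw [tsum_mul_left]
    rw [add_mul, one_mul, claim1, claim2, ← Summable.tsum_add h2sum h1sum, hsF]
    apply tsum_congr
    intro j
    ring
  -- constancy of F x * (1+x)^(-s)
  set H : ℝ → ℝ := fun x => F x * (1 + x) ^ (-s) with hH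
  have hHderiv : ∀ x ∈ T, HasDerivAt H 0 x := by
    intro x hx
    have hx1 : 0 < 1 + x := by have h1 := hx.1; linarith [hb1]
    have hr1 : HasDerivAt (fun y : ℝ => 1 + y) 1 x := (hasDerivAt_id x).const_add 1
    have hr2 : HasDerivAt (fun y : ℝ => (1 + y) ^ (-s)) (-s * (1 + x) ^ (-s - 1)) x := by
      have := (Real.hasDerivAt_rpow_const (p := -s) (Or.inl hx1.ne')).comp x hr1
      exact this.congr_deriv (by ring)
    have hd := (hFderiv x hx).mul hr2
    have hfac : (1 + x) ^ (-s) = (1 + x) ^ (-s - 1) * (1 + x) := by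
      rw [← Real.rpow_add_one hx1.ne']
      ring_nf
    have hODEx := hODE x hx
    have hval : (∑' j, g' j x) * (1 + x) ^ (-s) + F x * (-s * (1 + x) ^ (-s - 1)) = 0 := by
      rw [hfac]
      linear_combination ((1 + x) ^ (-s - 1)) * hODEx
    exact hval ▸ hd
  have ht0T : Icc (0:ℝ) t ⊆ T := by
    intro y hy
    exact ⟨by linarith [hy.1], by linarith [hy.2, htb]⟩
  have hHconst : H t = H 0 := by
    have hcont : ContinuousOn H (Icc 0 t) := fun y hy =>
      ((hHderiv y (ht0T hy)).continuousAt).continuousWithinAt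
    have hder : ∀ y ∈ Ico (0:ℝ) t, HasDerivWithinAt H 0 (Ici y) y := fun y hy =>
      (hHderiv y (ht0T ⟨hy.1, hy.2.le⟩)).hasDerivWithinAt
    exact constant_of_has_deriv_right_zero hcont hder t (right_mem_Icc.mpr ht0)
  have hF0 : F 0 = 1 := by
    have h : ∀ j : ℕ, j ≠ 0 → g j 0 = 0 := by
      intro j hj; simp [hg, zero_pow hj]
    show (∑' j, g j 0) = 1
    rw [tsum_eq_single 0 h]
    simp [hg, cB_zero]
  have hH0 : H 0 = 1 := by rw [hH]; simp [hF0]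
  have hFt : F t = (1 + t) ^ s := by
    have h1t : (0:ℝ) < 1 + t := by linarith
    have hEq : F t * (1 + t) ^ (-s) = 1 := hHconst.trans hH0
    have hne : (1 + t) ^ s ≠ 0 := (Real.rpow_pos_of_pos h1t s).ne'
    rw [Real.rpow_neg h1t.le] at hEq
    field_simp at hEq
    exact hEq
  rw [← hFt]
  exact (hFsum t ht_mem).hasSum

lemma integrableOn_beta_integrand {u v : ℝ} (hu : 0 < u) (hv : 0 < v) :
    IntegrableOn (fun t : ℝ => t ^ (u-1) * (1-t) ^ (v-1)) (Ioo (0:ℝ) 1) := by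
  have hc := Complex.betaIntegral_convergent (u := (u:ℂ)) (v := (v:ℂ))
    (by simpa using hu) (by simpa using hv)
  have hIoc : IntegrableOn (fun x : ℝ => (x:ℂ) ^ ((u:ℂ)-1) * (1-(x:ℂ)) ^ ((v:ℂ)-1))
      (Ioc (0:ℝ) 1) := by
    rwa [intervalIntegrable_iff_integrableOn_Ioc_of_le zero_le_one] at hc
  have hIoo := (hIoc.mono_set Ioo_subset_Ioc_self).norm
  apply MeasureTheory.IntegrableOn.congr_fun hIoo _ measurableSet_Ioo
  intro t ht
  simp only [norm_mul]
  rw [show (1:ℂ) - (t:ℂ) = ((1 - t : ℝ):ℂ) by push_cast; ring]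
  rw [Complex.norm_cpow_eq_rpow_re_of_pos ht.1,
    Complex.norm_cpow_eq_rpow_re_of_pos (by linarith [ht.2] : (0:ℝ) < 1 - t)]
  norm_num

lemma betaFn_eq_integral {u v : ℝ} (hu : 0 < u) (hv : 0 < v) :
    (∫ t in Ioo (0:ℝ) 1, t ^ (u-1) * (1-t) ^ (v-1)) = betaFn u v := by
  set A : ℝ := ∫ t in Ioo (0:ℝ) 1, t ^ (u-1) * (1-t) ^ (v-1) with hA
  have hptwise : EqOn (fun t : ℝ => (t:ℂ) ^ ((u:ℂ)-1) * (1-(t:ℂ)) ^ ((v:ℂ)-1))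
      (fun t : ℝ => ((t ^ (u-1) * (1-t) ^ (v-1) : ℝ) : ℂ)) (Ioo (0:ℝ) 1) := by
    intro t ht
    simp only
    have h1 : (t:ℂ) ^ ((u:ℂ)-1) = ((t ^ (u-1) : ℝ) : ℂ) := by
      rw [Complex.ofReal_cpow ht.1.le]
      push_cast
      ring_nf
    have h2 : (1-(t:ℂ)) ^ ((v:ℂ)-1) = (((1-t) ^ (v-1) : ℝ) : ℂ) := by
      rw [show (1 - (t:ℂ)) = (((1-t:ℝ)):ℂ) by push_cast; ring]
      rw [Complex.ofReal_cpow (by linarith [ht.2])]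
      push_cast
      ring_nf
    rw [h1, h2]
    push_cast
    ring
  have hcomplex : Complex.betaIntegral u v = (A : ℂ) := by
    calc Complex.betaIntegral u v
        = ∫ t in Ioo (0:ℝ) 1, (t:ℂ) ^ ((u:ℂ)-1) * (1-(t:ℂ)) ^ ((v:ℂ)-1) := by
          rw [Complex.betaIntegral, intervalIntegral.integral_of_le zero_le_one,
            integral_Ioc_eq_integral_Ioo]
      _ = ∫ t in Ioo (0:ℝ) 1, ((t ^ (u-1) * (1-t) ^ (v-1) : ℝ) : ℂ) :=
          setIntegral_congr_fun measurableSet_Ioo hptwise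
      _ = (A : ℂ) := integral_ofReal
  have hrel := Complex.Gamma_mul_Gamma_eq_betaIntegral
    (s := (u:ℂ)) (t := (v:ℂ)) (by simpa using hu) (by simpa using hv)
  rw [hcomplex] at hrel
  have huv : ((u:ℂ) + (v:ℂ)) = ((u+v : ℝ) : ℂ) := by push_cast; ring
  rw [huv, Complex.Gamma_ofReal, Complex.Gamma_ofReal, Complex.Gamma_ofReal] at hrel
  have hreal : Real.Gamma u * Real.Gamma v = Real.Gamma (u+v) * A := by
    exact_mod_cast hrel
  have hne : Real.Gamma (u+v) ≠ 0 := (Real.Gamma_pos_of_pos (by linarith)).ne'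
  rw [betaFn, hreal]
  field_simp

lemma term_eq {s u v : ℝ} (hu : 0 < u) (hv : 0 < v) (j : ℕ) :
    cB s j * betaFn (u + j) v =
      betaFn u v * (poch (-s) j * poch u j / (poch (u+v) j * (j.factorial : ℝ)) * (-1:ℝ)^j) := by
  rw [betaFn_add_nat hu hv j, cB]
  have h1 : poch (u+v) j ≠ 0 := (poch_pos (by linarith) j).ne'
  have h2 : (j.factorial : ℝ) ≠ 0 := Nat.cast_ne_zero.mpr j.factorial_ne_zero
  field_simp

lemma summable_twoF1_neg_one {s u v : ℝ} (hs : 0 ≤ s) (hu : 0 < u) (hv : 0 < v) :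
    Summable (fun j : ℕ =>
      poch (-s) j * poch u j / (poch (u+v) j * (j.factorial : ℝ)) * (-1:ℝ)^j) := by
  have hsum : Summable (fun j : ℕ => cB s j * betaFn (u + j) v) := by
    rw [← summable_abs_iff]
    apply (summable_abs_cB_mul_betaFn hs hu hv).congr
    intro j
    rw [abs_mul, abs_of_pos (betaFn_pos (by positivity) hv)]
  have hBne : betaFn u v ≠ 0 := (betaFn_pos hu hv).ne'
  have := hsum.mul_left (betaFn u v)⁻¹
  apply this.congr
  intro j
  rw [term_eq hu hv j]
  field_simp
lemma mem_Ioo_pos {t : ℝ} (ht : t ∈ Ioo (0:ℝ) 1) : 0 < t := ht.1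

/-- Euler-type integral: `∫₀¹ t^{u-1} (1-t)^{v-1} (1+t)^s dt = B(u,v) ₂F₁(-s, u; u+v; -1)`. -/
lemma integral_beta_binom {s u v : ℝ} (hs : 0 ≤ s) (hu : 0 < u) (hv : 0 < v) :
    (∫ t in Ioo (0:ℝ) 1, t ^ (u-1) * (1-t) ^ (v-1) * (1+t) ^ s)
      = betaFn u v * twoF1 (-s) u (u+v) (-1) := by
  set F : ℕ → ℝ → ℝ := fun j t => cB s j * t ^ j * (t ^ (u-1) * (1-t) ^ (v-1)) with hF
  set μ := volume.restrict (Ioo (0:ℝ) 1) with hμ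
  -- each term is integrable with integral cB s j * betaFn (u+j) v
  have hbeta_j : ∀ j : ℕ, 0 < u + j := fun j => by positivity
  have hEq : ∀ j : ℕ, EqOn (fun t : ℝ => cB s j * (t ^ ((u+j)-1) * (1-t) ^ (v-1)))
      (F j) (Ioo (0:ℝ) 1) := by
    intro j t ht
    simp only [hF]
    have h1 : t ^ ((u+j)-1) = t ^ (j:ℕ) * t ^ (u-1) := by
      rw [← Real.rpow_natCast t j, ← Real.rpow_add ht.1]
      ring_nf
    rw [h1]; ring
  have hint : ∀ j : ℕ, Integrable (F j) μ := by
    intro j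
    rw [hμ]
    apply MeasureTheory.IntegrableOn.congr_fun _ (hEq j) measurableSet_Ioo
    exact ((integrableOn_beta_integrand (hbeta_j j) hv).const_mul _)
  have hval : ∀ j : ℕ, ∫ t, F j t ∂μ = cB s j * betaFn (u+j) v := by
    intro j
    rw [hμ, ← setIntegral_congr_fun measurableSet_Ioo (hEq j)]
    rw [integral_const_mul, betaFn_eq_integral (hbeta_j j) hv]
  have hnorm : ∀ j : ℕ, (∫ t, ‖F j t‖ ∂μ) = |cB s j| * betaFn (u+j) v := by
    intro j
    have : EqOn (fun t : ℝ => ‖F j t‖)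
        (fun t : ℝ => |cB s j| * (t ^ ((u+j)-1) * (1-t) ^ (v-1))) (Ioo (0:ℝ) 1) := by
      intro t ht
      simp only
      rw [← hEq j ht]
      simp only [Real.norm_eq_abs, abs_mul]
      rw [abs_of_nonneg (Real.rpow_nonneg ht.1.le _),
        abs_of_nonneg (Real.rpow_nonneg (by linarith [ht.2] : (0:ℝ) ≤ 1 - t) _)]
    rw [hμ, setIntegral_congr_fun measurableSet_Ioo this, integral_const_mul,
      betaFn_eq_integral (hbeta_j j) hv]
  have hsummable_norm : Summable (fun j : ℕ => ∫ t, ‖F j t‖ ∂μ) := by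
    apply (summable_abs_cB_mul_betaFn hs hu hv).congr
    intro j
    rw [hnorm j]
  -- interchange
  have hswap := MeasureTheory.integral_tsum_of_summable_integral_norm hint hsummable_norm
  -- pointwise sum is the integrand
  have hptwise : EqOn (fun t : ℝ => ∑' j, F j t)
      (fun t : ℝ => t ^ (u-1) * (1-t) ^ (v-1) * (1+t) ^ s) (Ioo (0:ℝ) 1) := by
    intro t ht
    simp only [hF]
    rw [tsum_mul_right]
    rw [(binom_hasSum s ht.1.le ht.2).tsum_eq]
    ring
  have hL : (∫ t, (∑' j, F j t) ∂μ)
      = ∫ t in Ioo (0:ℝ) 1, t ^ (u-1) * (1-t) ^ (v-1) * (1+t) ^ s := by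
    rw [hμ]
    exact setIntegral_congr_fun measurableSet_Ioo hptwise
  rw [← hL, ← hswap]
  have : ∀ j : ℕ, (∫ t, F j t ∂μ) = betaFn u v *
      (poch (-s) j * poch u j / (poch (u+v) j * (j.factorial : ℝ)) * (-1:ℝ)^j) := by
    intro j
    rw [hval j, term_eq hu hv j]
  rw [tsum_congr this, tsum_mul_left]
  rfl

lemma integrableOn_g {u v s : ℝ} (hu : 0 < u) (hv : 0 < v) (hs : 0 ≤ s) :
    IntegrableOn (fun t : ℝ => t ^ (u-1) * (1-t) ^ (v-1) * (1+t) ^ s) (Ioo (0:ℝ) 1) := by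
  have hbase := integrableOn_beta_integrand hu hv
  have hmeas : AEStronglyMeasurable (fun t : ℝ => t ^ (u-1) * (1-t) ^ (v-1) * (1+t) ^ s)
      (volume.restrict (Ioo (0:ℝ) 1)) := by
    apply Measurable.aestronglyMeasurable
    fun_prop
  apply Integrable.mono' (hbase.const_mul ((2:ℝ) ^ s)) hmeas
  rw [ae_restrict_iff' measurableSet_Ioo]
  apply Filter.Eventually.of_forall
  intro t ht
  have h1 : (0:ℝ) < t := ht.1
  have h2 : t < 1 := ht.2
  have hb1 : (0:ℝ) ≤ t ^ (u-1) * (1-t) ^ (v-1) := by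
    apply mul_nonneg (Real.rpow_nonneg h1.le _) (Real.rpow_nonneg (by linarith) _)
  rw [Real.norm_eq_abs, abs_mul, abs_of_nonneg hb1,
    abs_of_nonneg (Real.rpow_nonneg (by linarith : (0:ℝ) ≤ 1+t) _)]
  have h3 : (1+t) ^ s ≤ (2:ℝ) ^ s :=
    Real.rpow_le_rpow (by linarith) (by linarith) hs
  calc t ^ (u-1) * (1-t) ^ (v-1) * (1+t) ^ s ≤ t ^ (u-1) * (1-t) ^ (v-1) * (2:ℝ) ^ s :=
        mul_le_mul_of_nonneg_left h3 hb1
    _ = (2:ℝ) ^ s * (t ^ (u-1) * (1-t) ^ (v-1)) := by ring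

lemma sq_image_Ioo : (fun ρ : ℝ => ρ^2) '' Ioo (0:ℝ) 1 = Ioo (0:ℝ) 1 := by
  ext x
  simp only [mem_image, mem_Ioo]
  constructor
  · rintro ⟨ρ, ⟨h0, h1⟩, rfl⟩
    exact ⟨by positivity, by nlinarith⟩
  · rintro ⟨h0, h1⟩
    refine ⟨Real.sqrt x, ⟨Real.sqrt_pos.mpr h0, (Real.sqrt_lt' one_pos).mpr (by linarith)⟩,
      Real.sq_sqrt h0.le⟩

lemma sq_injOn : InjOn (fun ρ : ℝ => ρ^2) (Ioo (0:ℝ) 1) := by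
  intro a ha b hb h
  simp only at h
  have h' : Real.sqrt (a^2) = Real.sqrt (b^2) := by rw [h]
  rw [Real.sqrt_sq_eq_abs, Real.sqrt_sq_eq_abs, abs_of_pos ha.1, abs_of_pos hb.1] at h'
  exact h'

lemma sq_hasDeriv : ∀ ρ ∈ Ioo (0:ℝ) 1,
    HasDerivWithinAt (fun ρ : ℝ => ρ^2) (2*ρ) (Ioo (0:ℝ) 1) ρ := by
  intro ρ _
  simpa using (hasDerivAt_pow 2 ρ).hasDerivWithinAt

lemma smul_eqOn {e : ℕ} {v s : ℝ} (he : 1 ≤ e) :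
    EqOn (fun ρ : ℝ => |2*ρ| • ((fun t : ℝ =>
        t ^ (((e:ℝ)+1)/2 - 1) * (1-t) ^ (v-1) * (1+t) ^ s) (ρ^2)))
      (fun ρ : ℝ => 2 * ((ρ:ℝ)^e * ((1-ρ^2) ^ (v-1) * (1+ρ^2) ^ s))) (Ioo (0:ℝ) 1) := by
  intro ρ hρ
  have h0 : (0:ℝ) < ρ := hρ.1
  simp only [smul_eq_mul]
  rw [abs_of_pos (by linarith : (0:ℝ) < 2*ρ)]
  have h1 : (ρ^2 : ℝ) ^ (((e:ℝ)+1)/2 - 1) = ρ ^ ((e:ℝ) - 1) := by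
    rw [← Real.rpow_natCast ρ 2, ← Real.rpow_mul h0.le]
    congr 1
    push_cast
    ring
  have h2 : ρ * ρ ^ ((e:ℝ) - 1) = ρ ^ (e:ℕ) := by
    rw [← Real.rpow_natCast ρ e]
    calc ρ * ρ ^ ((e:ℝ) - 1) = ρ ^ (1:ℝ) * ρ ^ ((e:ℝ)-1) := by rw [Real.rpow_one]
      _ = ρ ^ ((e:ℝ)) := by rw [← Real.rpow_add h0]; ring_nf
  rw [h1]
  calc 2 * ρ * (ρ ^ ((e:ℝ)-1) * (1-ρ^2) ^ (v-1) * (1+ρ^2) ^ s)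
      = 2 * ((ρ * ρ ^ ((e:ℝ)-1)) * ((1-ρ^2) ^ (v-1) * (1+ρ^2) ^ s)) := by ring
    _ = 2 * ((ρ:ℝ)^e * ((1-ρ^2) ^ (v-1) * (1+ρ^2) ^ s)) := by rw [h2]

lemma integrableOn_even_pos {e : ℕ} {v s : ℝ} (he : 1 ≤ e) (hv : 0 < v) (hs : 0 ≤ s) :
    IntegrableOn (fun ρ : ℝ => (ρ:ℝ)^e * ((1-ρ^2) ^ (v-1) * (1+ρ^2) ^ s)) (Ioo (0:ℝ) 1) := by
  have hu : 0 < ((e:ℝ)+1)/2 := by positivity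
  have hg := integrableOn_g hu hv hs
  rw [← sq_image_Ioo] at hg
  rw [integrableOn_image_iff_integrableOn_abs_deriv_smul measurableSet_Ioo sq_hasDeriv
    sq_injOn] at hg
  have hg2 : IntegrableOn (fun ρ : ℝ => 2 * ((ρ:ℝ)^e * ((1-ρ^2) ^ (v-1) * (1+ρ^2) ^ s)))
      (Ioo (0:ℝ) 1) :=
    MeasureTheory.IntegrableOn.congr_fun hg (smul_eqOn he) measurableSet_Ioo
  have h12 := hg2.const_mul (1/2 : ℝ)
  apply MeasureTheory.IntegrableOn.congr_fun h12 _ measurableSet_Ioo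
  intro t _
  simp only
  ring

lemma even_fun_eq {e : ℕ} {v s : ℝ} (he : Even e) (ρ : ℝ) :
    ((-ρ:ℝ))^e * ((1-(-ρ)^2) ^ (v-1) * (1+(-ρ)^2) ^ s)
      = (ρ:ℝ)^e * ((1-ρ^2) ^ (v-1) * (1+ρ^2) ^ s) := by
  rw [he.neg_pow, neg_pow, Even.neg_one_pow even_two]
  ring_nf

lemma neg_hasDeriv : ∀ ρ ∈ Ioo (0:ℝ) 1,
    HasDerivWithinAt (fun ρ : ℝ => -ρ) (-1) (Ioo (0:ℝ) 1) ρ := by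
  intro ρ _
  exact (hasDerivAt_neg ρ).hasDerivWithinAt

lemma neg_image_Ioo : (fun ρ : ℝ => -ρ) '' Ioo (0:ℝ) 1 = Ioo (-1:ℝ) 0 := by
  rw [show (fun ρ : ℝ => -ρ) = Neg.neg from rfl, Set.image_neg_Ioo]
  norm_num

lemma neg_injOn : InjOn (fun ρ : ℝ => -ρ) (Ioo (0:ℝ) 1) := fun a _ b _ h => by
  simpa using congrArg Neg.neg h

lemma integrableOn_even_neg {e : ℕ} {v s : ℝ} (he : Even e) (he1 : 1 ≤ e) (hv : 0 < v)
    (hs : 0 ≤ s) :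
    IntegrableOn (fun ρ : ℝ => (ρ:ℝ)^e * ((1-ρ^2) ^ (v-1) * (1+ρ^2) ^ s)) (Ioo (-1:ℝ) 0) := by
  rw [← neg_image_Ioo,
    integrableOn_image_iff_integrableOn_abs_deriv_smul measurableSet_Ioo neg_hasDeriv neg_injOn]
  apply MeasureTheory.IntegrableOn.congr_fun (integrableOn_even_pos he1 hv hs) _ measurableSet_Ioo
  intro ρ _
  simp only [smul_eq_mul]
  rw [even_fun_eq he]
  norm_num

lemma integral_even_neg {e : ℕ} {v s : ℝ} (he : Even e) :
    (∫ ρ in Ioo (-1:ℝ) 0, (ρ:ℝ)^e * ((1-ρ^2) ^ (v-1) * (1+ρ^2) ^ s))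
      = ∫ ρ in Ioo (0:ℝ) 1, (ρ:ℝ)^e * ((1-ρ^2) ^ (v-1) * (1+ρ^2) ^ s) := by
  rw [← neg_image_Ioo, integral_image_eq_integral_abs_deriv_smul measurableSet_Ioo
    neg_hasDeriv neg_injOn]
  apply setIntegral_congr_fun measurableSet_Ioo
  intro ρ _
  simp only [smul_eq_mul]
  rw [even_fun_eq he]
  norm_num

lemma integral_even_pos {e : ℕ} {v s : ℝ} (he1 : 1 ≤ e) :
    (∫ t in Ioo (0:ℝ) 1, t ^ (((e:ℝ)+1)/2 - 1) * (1-t) ^ (v-1) * (1+t) ^ s)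
      = 2 * ∫ ρ in Ioo (0:ℝ) 1, (ρ:ℝ)^e * ((1-ρ^2) ^ (v-1) * (1+ρ^2) ^ s) := by
  have himg := integral_image_eq_integral_abs_deriv_smul measurableSet_Ioo sq_hasDeriv sq_injOn
    (fun t : ℝ => t ^ (((e:ℝ)+1)/2 - 1) * (1-t) ^ (v-1) * (1+t) ^ s)
  rw [sq_image_Ioo] at himg
  rw [himg, setIntegral_congr_fun measurableSet_Ioo (smul_eqOn he1), integral_const_mul]

/-- Main substitution lemma: reduces the `(-1,1)` integral to the Beta-type integral. -/
lemma integral_even_full {e : ℕ} {v s : ℝ} (he : Even e) (he1 : 1 ≤ e) (hv : 0 < v)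
    (hs : 0 ≤ s) :
    (∫ ρ in Ioo (-1:ℝ) 1, (ρ:ℝ)^e * ((1-ρ^2) ^ (v-1) * (1+ρ^2) ^ s))
      = ∫ t in Ioo (0:ℝ) 1, t ^ (((e:ℝ)+1)/2 - 1) * (1-t) ^ (v-1) * (1+t) ^ s := by
  have hsplit : Ioo (-1:ℝ) 1 = Ioc (-1:ℝ) 0 ∪ Ioo (0:ℝ) 1 :=
    (Ioc_union_Ioo_eq_Ioo (by norm_num) (by norm_num)).symm
  have hdisj : Disjoint (Ioc (-1:ℝ) 0) (Ioo (0:ℝ) 1) := by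
    apply Set.disjoint_left.mpr
    intro x hx hx'
    exact absurd hx'.1 (not_lt.mpr hx.2)
  have hIocIoo : IntegrableOn (fun ρ : ℝ => (ρ:ℝ)^e * ((1-ρ^2) ^ (v-1) * (1+ρ^2) ^ s))
      (Ioc (-1:ℝ) 0) := by
    rw [IntegrableOn, MeasureTheory.Measure.restrict_congr_set Ioo_ae_eq_Ioc.symm]
    exact integrableOn_even_neg he he1 hv hs
  rw [hsplit, setIntegral_union hdisj measurableSet_Ioo hIocIoo
    (integrableOn_even_pos he1 hv hs)]
  rw [integral_Ioc_eq_integral_Ioo, integral_even_neg he, integral_even_pos he1]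
  ring

lemma integrableOn_even_full {e : ℕ} {v s : ℝ} (he : Even e) (he1 : 1 ≤ e) (hv : 0 < v)
    (hs : 0 ≤ s) :
    IntegrableOn (fun ρ : ℝ => (ρ:ℝ)^e * ((1-ρ^2) ^ (v-1) * (1+ρ^2) ^ s)) (Ioo (-1:ℝ) 1) := by
  have hsplit : Ioo (-1:ℝ) 1 = Ioc (-1:ℝ) 0 ∪ Ioo (0:ℝ) 1 :=
    (Ioc_union_Ioo_eq_Ioo (by norm_num) (by norm_num)).symm
  rw [hsplit]
  apply MeasureTheory.IntegrableOn.union _ (integrableOn_even_pos he1 hv hs)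
  rw [IntegrableOn, MeasureTheory.Measure.restrict_congr_set Ioo_ae_eq_Ioc.symm]
  exact integrableOn_even_neg he he1 hv hs


/-- Corollary 1, odd moments: the unnormalized odd posterior moment integral equals a
convergent series in odd powers of `r`. -/
theorem posterior_moment_odd (n : ℕ) (hn : 1 ≤ n) (α β γ δ : ℝ) (hα : 0 < α) (hβ : 0 ≤ β)
    (hcond : γ + δ - 2 * α + 1 < (n : ℝ)) (r : ℝ) (hr : r ∈ Ioo (-1 : ℝ) 1)
    (k : ℕ) (hk : Odd k) :
    (∫ ρ in Ioo (-1 : ℝ) 1,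
        ρ ^ k * (2 * r * ρ * (1 - ρ ^ 2) ^ ((2 * α + (n : ℝ) - γ - δ - 3) / 2) *
          (1 + ρ ^ 2) ^ (β / 2) * Wgd γ δ n *
          twoF1 (((n : ℝ) - γ) / 2) (((n : ℝ) - δ) / 2) (3 / 2) (r ^ 2 * ρ ^ 2))) =
        2 * Wgd γ δ n * (∑' m : ℕ,
          poch (((n : ℝ) - γ) / 2) m * poch (((n : ℝ) - δ) / 2) m /
              (poch (3 / 2) m * (m.factorial : ℝ)) *
            (betaFn (((k : ℝ) + 2 * m + 2) / 2) (α + ((n : ℝ) - γ - δ - 1) / 2) *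
              twoF1 (-β / 2) (((k : ℝ) + 2 * m + 2) / 2)
                (((k : ℝ) + 2 * m + 2 * α + (n : ℝ) - γ - δ + 1) / 2) (-1)) *
            r ^ (2 * m + 1)) ∧
      Summable (fun m : ℕ =>
        poch (((n : ℝ) - γ) / 2) m * poch (((n : ℝ) - δ) / 2) m /
            (poch (3 / 2) m * (m.factorial : ℝ)) *
          (betaFn (((k : ℝ) + 2 * m + 2) / 2) (α + ((n : ℝ) - γ - δ - 1) / 2) *
            twoF1 (-β / 2) (((k : ℝ) + 2 * m + 2) / 2)
              (((k : ℝ) + 2 * m + 2 * α + (n : ℝ) - γ - δ + 1) / 2) (-1)) *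
          r ^ (2 * m + 1)) := by
  -- abbreviations
  set a : ℝ := ((n : ℝ) - γ) / 2 with ha
  set b : ℝ := ((n : ℝ) - δ) / 2 with hb
  set s : ℝ := β / 2 with hs
  set v : ℝ := α + ((n : ℝ) - γ - δ - 1) / 2 with hv
  set W : ℝ := Wgd γ δ n with hW
  have hs0 : 0 ≤ s := by rw [hs]; linarith
  have hv0 : 0 < v := by rw [hv]; linarith
  have hP : (2 * α + (n : ℝ) - γ - δ - 3) / 2 = v - 1 := by rw [hv]; ring
  have hns : -s = -β / 2 := by rw [hs]; ring
  have hk1 : 1 ≤ k := hk.pos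
  have hrabs : |r| < 1 := abs_lt.mpr ⟨hr.1, hr.2⟩
  have hz : |r ^ 2| < 1 := by
    rw [abs_pow]
    exact pow_lt_one₀ (abs_nonneg r) hrabs (by norm_num)
  set C : ℕ → ℝ := fun m => poch a m * poch b m / (poch (3/2 : ℝ) m * (m.factorial : ℝ)) with hC
  have hCsum : Summable (fun m : ℕ => C m * (r ^ 2) ^ m) := by
    rw [hC]
    exact summable_poch_ratio (by norm_num) hz
  set e : ℕ → ℕ := fun m => k + 1 + 2 * m with he
  have he_even : ∀ m, Even (e m) := fun m => (hk.add_one).add (even_two_mul m)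
  have he1 : ∀ m, 1 ≤ e m := fun m => by simp only [he]; omega
  set u : ℕ → ℝ := fun m => ((e m : ℝ) + 1) / 2 with hu
  have hu_eq : ∀ m : ℕ, u m = ((k : ℝ) + 2 * m + 2) / 2 := fun m => by
    rw [hu, he]; push_cast; ring
  have hu_pos : ∀ m : ℕ, 0 < u m := fun m => by rw [hu]; positivity
  have huv_eq : ∀ m : ℕ, u m + v = ((k : ℝ) + 2 * m + 2 * α + (n : ℝ) - γ - δ + 1) / 2 :=
    fun m => by rw [hu, he, hv]; push_cast; ring
  -- the inner (positive) integrals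
  set I : ℕ → ℝ := fun m => ∫ t in Ioo (0:ℝ) 1, t ^ (u m - 1) * (1-t) ^ (v-1) * (1+t) ^ s
    with hI
  have hIval : ∀ m : ℕ, I m = betaFn (u m) v * twoF1 (-s) (u m) (u m + v) (-1) := fun m =>
    integral_beta_binom hs0 (hu_pos m) hv0
  have hInonneg : ∀ m : ℕ, 0 ≤ I m := by
    intro m
    apply setIntegral_nonneg measurableSet_Ioo
    intro t ht
    have h1 : (0:ℝ) < t := ht.1
    have h2 : t < 1 := ht.2
    apply mul_nonneg (mul_nonneg (Real.rpow_nonneg h1.le _)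
      (Real.rpow_nonneg (by linarith) _)) (Real.rpow_nonneg (by linarith) _)
  set K : ℝ := ∫ t in Ioo (0:ℝ) 1, t ^ (u 0 - 1) * (1-t) ^ (v-1) * (1+t) ^ s with hK
  have hIK : ∀ m : ℕ, I m ≤ K := by
    intro m
    rw [hI, hK]
    apply setIntegral_mono_on (integrableOn_g (hu_pos m) hv0 hs0)
      (integrableOn_g (hu_pos 0) hv0 hs0) measurableSet_Ioo
    intro t ht
    have h1 : (0:ℝ) < t := ht.1
    have h2 : t ≤ 1 := ht.2.le
    have hmono : t ^ (u m - 1) ≤ t ^ (u 0 - 1) := by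
      apply Real.rpow_le_rpow_of_exponent_ge h1 h2
      have : u 0 ≤ u m := by
        rw [hu_eq 0, hu_eq m]
        have hm : (0:ℝ) ≤ (m:ℝ) := Nat.cast_nonneg m
        push_cast
        linarith
      linarith
    apply mul_le_mul_of_nonneg_right (mul_le_mul_of_nonneg_right hmono
      (Real.rpow_nonneg (by linarith [ht.2] : (0:ℝ) ≤ 1 - t) _))
      (Real.rpow_nonneg (by linarith : (0:ℝ) ≤ 1 + t) _)
  -- the series of functions under the integral
  set G : ℕ → ℝ → ℝ := fun m ρ => (2 * r * W * C m * r ^ (2 * m)) *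
    (ρ ^ (e m) * ((1 - ρ^2) ^ (v-1) * (1 + ρ^2) ^ s)) with hG
  set μ := volume.restrict (Ioo (-1:ℝ) 1) with hμ
  have hGint : ∀ m : ℕ, Integrable (G m) μ := by
    intro m
    rw [hμ, hG]
    exact (integrableOn_even_full (he_even m) (he1 m) hv0 hs0).const_mul _
  -- pointwise identity: the integrand equals ∑' m, G m ρ
  have hpt : ∀ ρ : ℝ,
      ρ ^ k * (2 * r * ρ * (1 - ρ ^ 2) ^ ((2 * α + (n : ℝ) - γ - δ - 3) / 2) *
        (1 + ρ ^ 2) ^ (β / 2) * W * twoF1 a b (3/2) (r ^ 2 * ρ ^ 2)) = ∑' m, G m ρ := by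
    intro ρ
    rw [hP, show β / 2 = s from rfl, twoF1]
    rw [← tsum_mul_left, ← tsum_mul_left]
    apply tsum_congr
    intro m
    rw [hG]
    simp only [← hC]
    rw [he]
    simp only [pow_add, pow_mul, pow_one, mul_pow]
    ring
  -- value of each term integral
  have hGval : ∀ m : ℕ, ∫ ρ, G m ρ ∂μ = (2 * W) *
      (C m * (betaFn (((k : ℝ) + 2 * m + 2) / 2) v *
        twoF1 (-β / 2) (((k : ℝ) + 2 * m + 2) / 2)
          (((k : ℝ) + 2 * m + 2 * α + (n : ℝ) - γ - δ + 1) / 2) (-1)) * r ^ (2 * m + 1)) := by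
    intro m
    rw [hμ, hG, integral_const_mul, integral_even_full (he_even m) (he1 m) hv0 hs0]
    have h1 : (∫ t in Ioo (0:ℝ) 1, t ^ (((e m : ℝ) + 1)/2 - 1) * (1-t) ^ (v-1) * (1+t) ^ s)
        = I m := by rw [hI, hu]
    rw [h1, hIval m, huv_eq m, hu_eq m, hns]
    rw [pow_succ]
    ring
  -- summability of the norm integrals
  have hGnorm_le : ∀ m : ℕ, (∫ ρ, ‖G m ρ‖ ∂μ) ≤ (|2 * r * W| * K) * |C m * (r ^ 2) ^ m| := by
    intro m
    have hfeq : EqOn (fun ρ : ℝ => ‖G m ρ‖)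
        (fun ρ : ℝ => |2 * r * W * C m * r ^ (2*m)| *
          (ρ ^ (e m) * ((1 - ρ^2) ^ (v-1) * (1 + ρ^2) ^ s))) (Ioo (-1:ℝ) 1) := by
      intro ρ hρ
      simp only [hG, Real.norm_eq_abs, abs_mul]
      have h2 : (0:ℝ) ≤ ρ ^ (e m) := (he_even m).pow_nonneg ρ
      have h3 : (0:ℝ) ≤ (1 - ρ^2) ^ (v-1) := by
        apply Real.rpow_nonneg
        nlinarith [hρ.1, hρ.2]
      have h4 : (0:ℝ) ≤ (1 + ρ^2) ^ s := Real.rpow_nonneg (by positivity) _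
      rw [abs_of_nonneg h2, abs_of_nonneg h3, abs_of_nonneg h4]
    have h5 : (∫ ρ, ‖G m ρ‖ ∂μ) = |2 * r * W * C m * r ^ (2*m)| *
        (∫ ρ in Ioo (-1:ℝ) 1, ρ ^ (e m) * ((1 - ρ^2) ^ (v-1) * (1 + ρ^2) ^ s)) := by
      rw [hμ, setIntegral_congr_fun measurableSet_Ioo hfeq, integral_const_mul]
    rw [h5, integral_even_full (he_even m) (he1 m) hv0 hs0]
    have h6 : (∫ t in Ioo (0:ℝ) 1, t ^ (((e m : ℝ) + 1)/2 - 1) * (1-t) ^ (v-1) * (1+t) ^ s)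
        = I m := by rw [hI, hu]
    rw [h6]
    have h7 : |2 * r * W * C m * r ^ (2*m)| = |2 * r * W| * |C m * (r ^ 2) ^ m| := by
      rw [show (2 * r * W * C m * r ^ (2*m)) = (2 * r * W) * (C m * (r^2)^m) by
        rw [← pow_mul]; ring]
      rw [abs_mul]
    rw [h7]
    calc |2 * r * W| * |C m * (r ^ 2) ^ m| * I m
        ≤ |2 * r * W| * |C m * (r ^ 2) ^ m| * K := by
          apply mul_le_mul_of_nonneg_left (hIK m) (by positivity)
      _ = |2 * r * W| * K * |C m * (r ^ 2) ^ m| := by ring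
  have hGnorm_sum : Summable (fun m : ℕ => ∫ ρ, ‖G m ρ‖ ∂μ) := by
    apply Summable.of_nonneg_of_le
      (fun m => integral_nonneg (fun ρ => norm_nonneg _)) hGnorm_le
    exact (hCsum.abs).mul_left _
  -- interchange
  have hswap := MeasureTheory.integral_tsum_of_summable_integral_norm hGint hGnorm_sum
  constructor
  · -- the integral identity
    have hL : (∫ ρ in Ioo (-1:ℝ) 1,
        ρ ^ k * (2 * r * ρ * (1 - ρ ^ 2) ^ ((2 * α + (n : ℝ) - γ - δ - 3) / 2) *
          (1 + ρ ^ 2) ^ (β / 2) * W * twoF1 a b (3/2) (r ^ 2 * ρ ^ 2)))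
        = ∫ ρ, (∑' m, G m ρ) ∂μ := by
      rw [hμ]
      apply integral_congr_ae
      apply Filter.Eventually.of_forall
      intro ρ
      exact hpt ρ
    rw [hL, ← hswap, tsum_congr hGval, tsum_mul_left]
  · -- summability
    rw [← summable_abs_iff]
    apply Summable.of_nonneg_of_le (fun m => abs_nonneg _) _ ((hCsum.abs).mul_left (K * |r|))
    intro m
    have hB2 : betaFn (((k : ℝ) + 2 * m + 2) / 2) v *
        twoF1 (-β / 2) (((k : ℝ) + 2 * m + 2) / 2)
          (((k : ℝ) + 2 * m + 2 * α + (n : ℝ) - γ - δ + 1) / 2) (-1) = I m := by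
      rw [hIval m, huv_eq m, hu_eq m, hns]
    have hCm : poch a m * poch b m / (poch (3/2 : ℝ) m * (m.factorial : ℝ)) = C m := rfl
    rw [hCm, hB2]
    rw [abs_mul, abs_mul, abs_pow]
    have h8 : |I m| = I m := abs_of_nonneg (hInonneg m)
    rw [h8]
    have h9 : |r| ^ (2*m+1) = (r^2)^m * |r| := by
      rw [pow_succ, pow_mul, sq_abs]
    rw [h9]
    calc |C m| * I m * ((r^2)^m * |r|)
        ≤ |C m| * K * ((r^2)^m * |r|) := by
          apply mul_le_mul_of_nonneg_right
            (mul_le_mul_of_nonneg_left (hIK m) (abs_nonneg _)) (by positivity)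
      _ = K * |r| * (|C m| * (r^2)^m) := by ring
      _ = K * |r| * |C m * (r^2)^m| := by
          rw [abs_mul, abs_pow, abs_of_nonneg (sq_nonneg r)]
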